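/- If W is a double occurrence word of length 8 whose interlacement graph is the 4-cycle C4, then the vertices can be labeled v1, v2, v3, v4 so that they appear in this cyclic order on the 4-cycle and W is cyclically equivalent to v1 v4 v2 v1 v3 v2 v4 v3. -/

import Mathlib

open SimpleGraph

/-- Two letters are interlaced in a word if their occurrences alternate. -/
def Interlaced {α : Type} [DecidableEq α] (W : List α) (a b : α) : Prop :=
  W.filter (fun x => x == a || x == b) = [a, b, a, b] ∨
  W.filter (fun x => x == a || x == b) = [b, a, b, a]

/-- The interlacement graph of a word. -/
def interlacementGraph {α : Type} [DecidableEq α] (W : List α) : SimpleGraph α where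
  Adj a b := a ≠ b ∧ (Interlaced W a b ∨ Interlaced W b a)
  symm := ⟨fun a b h => ⟨h.1.symm, h.2.symm⟩⟩
  loopless := ⟨fun a h => h.1 rfl⟩

/-- A double occurrence word: each letter of the alphabet occurs exactly twice. -/
def IsDOW {α : Type} [DecidableEq α] (W : List α) : Prop := ∀ a : α, W.count a = 2

/-- A circle graph: a graph isomorphic to the interlacement graph of a
double occurrence word. -/
def IsCircleGraph {V : Type} (G : SimpleGraph V) : Prop :=
  ∃ (n : ℕ) (W : List (Fin n)), IsDOW W ∧ Nonempty (G ≃g interlacementGraph W)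

/-- Local complementation at a vertex `v`: toggle adjacency inside `N(v)`. -/
def localComplement {V : Type} (G : SimpleGraph V) (v : V) : SimpleGraph V where
  Adj x y := x ≠ y ∧ ((G.Adj v x ∧ G.Adj v y ∧ ¬ G.Adj x y) ∨
    (¬ (G.Adj v x ∧ G.Adj v y) ∧ G.Adj x y))
  symm := by
    refine ⟨?_⟩
    rintro x y ⟨hxy, h | h⟩
    · exact ⟨hxy.symm, Or.inl ⟨h.2.1, h.1, fun hc => h.2.2 hc.symm⟩⟩
    · exact ⟨hxy.symm, Or.inr ⟨fun hc => h.1 ⟨hc.2, hc.1⟩, h.2.symm⟩⟩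
  loopless := ⟨fun x h => h.1 rfl⟩

/-- A split `(V1, X1; V2, X2)` of a graph. -/
def IsSplit {V : Type} (G : SimpleGraph V) (V1 X1 V2 X2 : Set V) : Prop :=
  V1 ∪ V2 = Set.univ ∧ Disjoint V1 V2 ∧ 2 ≤ V1.encard ∧ 2 ≤ V2.encard ∧
  X1 ⊆ V1 ∧ X2 ⊆ V2 ∧ ∀ x ∈ V1, ∀ y ∈ V2, (G.Adj x y ↔ x ∈ X1 ∧ y ∈ X2)

/-- A graph has a split. -/
def HasSplit {V : Type} (G : SimpleGraph V) : Prop :=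
  ∃ V1 X1 V2 X2, IsSplit G V1 X1 V2 X2

/-- Twin vertices: same neighbours outside `{u, v}`. -/
def IsTwinPair {V : Type} (G : SimpleGraph V) (u v : V) : Prop :=
  u ≠ v ∧ G.neighborSet u \ {v} = G.neighborSet v \ {u}

/-- Adjacent twins. -/
def AdjacentTwins {V : Type} (G : SimpleGraph V) (u v : V) : Prop :=
  G.Adj u v ∧ G.neighborSet u \ {v} = G.neighborSet v \ {u}

/-- Nonadjacent twins. -/
def NonadjacentTwins {V : Type} (G : SimpleGraph V) (u v : V) : Prop :=
  u ≠ v ∧ ¬ G.Adj u v ∧ G.neighborSet u = G.neighborSet v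

/-- Delete a vertex: keep the vertex set, remove all edges at `v`. -/
def deleteVertex {V : Type} (G : SimpleGraph V) (v : V) : SimpleGraph V where
  Adj x y := G.Adj x y ∧ x ≠ v ∧ y ≠ v
  symm := ⟨fun x y h => ⟨h.1.symm, h.2.2, h.2.1⟩⟩
  loopless := ⟨fun x h => G.loopless.irrefl x h.1⟩

/-- `v` is a cutpoint of the connected graph `G`. -/
def IsCutpoint {V : Type} (G : SimpleGraph V) (v : V) : Prop :=
  G.Connected ∧ ∃ x y : V, x ≠ v ∧ y ≠ v ∧ ¬ (deleteVertex G v).Reachable x y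

/-- Cyclic equivalence of words: generated by rotations and reversals. -/
inductive CyclicEquiv {β : Type} : List β → List β → Prop
  | refl (l : List β) : CyclicEquiv l l
  | rot (l₁ l₂ : List β) : CyclicEquiv (l₁ ++ l₂) (l₂ ++ l₁)
  | rev (l : List β) : CyclicEquiv l l.reverse
  | symm {l₁ l₂ : List β} : CyclicEquiv l₁ l₂ → CyclicEquiv l₂ l₁
  | trans {l₁ l₂ l₃ : List β} : CyclicEquiv l₁ l₂ → CyclicEquiv l₂ l₃ → CyclicEquiv l₁ l₃

/-- `G` is 3-connected: more than 3 vertices, and removing fewer than 3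
vertices leaves it connected. -/
def ThreeConnected {V : Type} [Fintype V] (G : SimpleGraph V) : Prop :=
  3 < Fintype.card V ∧ ∀ K : Set V, K.ncard < 3 → (G.induce (Kᶜ : Set V)).Connected

/-- The disjoint union of two graphs, joined by a single edge from `a` to `b`. -/
def joinedByEdge {V₁ V₂ : Type} (G₁ : SimpleGraph V₁) (G₂ : SimpleGraph V₂)
    (a : V₁) (b : V₂) : SimpleGraph (V₁ ⊕ V₂) where
  Adj x y :=
    Sum.elim (fun u => Sum.elim (fun w => G₁.Adj u w) (fun w => u = a ∧ w = b) y)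
             (fun u => Sum.elim (fun w => u = b ∧ w = a) (fun w => G₂.Adj u w) y) x
  symm := by
    refine ⟨?_⟩
    rintro (u | u) (w | w) h
    · exact h.symm
    · exact ⟨h.2, h.1⟩
    · exact ⟨h.2, h.1⟩
    · exact h.symm
  loopless := by
    refine ⟨?_⟩
    rintro (u | u) h
    · exact G₁.loopless.irrefl u h
    · exact G₂.loopless.irrefl u h

/-- The 4-cycle on `Fin 4`. -/
def cycle4 : SimpleGraph (Fin 4) := SimpleGraph.fromRel (fun i j => j = i + 1)

/-!
Renaming letters by a bijection preserves double occurrence words and induces an isomorphism of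
interlacement graphs, and a graph isomorphic to the 4-cycle is 2-regular, which is invariant under
renaming and decidable. So we may rename the letters so that the word starts with `0` followed by
`0` or `1`; the remaining `2 · 4⁶` words are checked exhaustively, together with the search for a
labelling among the 24 permutations.
-/

instance {α : Type} [DecidableEq α] (W : List α) (a b : α) : Decidable (Interlaced W a b) :=
  inferInstanceAs (Decidable (_ ∨ _))

instance {α : Type} [DecidableEq α] (W : List α) : DecidableRel (interlacementGraph W).Adj :=
  fun a b => inferInstanceAs (Decidable (a ≠ b ∧ (Interlaced W a b ∨ Interlaced W b a)))

instance {α : Type} [DecidableEq α] [Fintype α] (W : List α) : Decidable (IsDOW W) :=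
  inferInstanceAs (Decidable (∀ a, W.count a = 2))

instance {V : Type} [Fintype V] (G : SimpleGraph V) [DecidableRel G.Adj] (d : ℕ) :
    Decidable (G.IsRegularOfDegree d) :=
  inferInstanceAs (Decidable (∀ v, G.degree v = d))

theorem CyclicEquiv.of_isRotated {β : Type} {l l' : List β} (h : l ~r l') : CyclicEquiv l l' := by
  obtain ⟨n, rfl⟩ := h
  rw [List.rotate_eq_drop_append_take_mod]
  conv_lhs => rw [← List.take_append_drop (n % l.length) l]
  exact .rot _ _

theorem SimpleGraph.IsRegularOfDegree.of_iso {V W : Type} [Fintype V] [Fintype W]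
    {G : SimpleGraph V} {H : SimpleGraph W} [DecidableRel G.Adj] [DecidableRel H.Adj] {d : ℕ}
    (e : G ≃g H) (h : H.IsRegularOfDegree d) : G.IsRegularOfDegree d :=
  fun v => (e.degree_eq v).symm.trans (h (e v))

instance : DecidableRel cycle4.Adj :=
  inferInstanceAs (DecidableRel (SimpleGraph.fromRel _).Adj)

theorem cycle4_isRegularOfDegree_two : cycle4.IsRegularOfDegree 2 := by
  decide

theorem exists_perm_apply_eq_zero_and_le_one {n : ℕ} (a b : Fin (n + 2)) :
    ∃ σ : Equiv.Perm (Fin (n + 2)), σ a = 0 ∧ σ b ≤ 1 := by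
  set τ := Equiv.swap a 0
  by_cases hb : τ b = 0
  · exact ⟨τ, Equiv.swap_apply_left a 0, hb.trans_le zero_le_one⟩
  · refine ⟨τ.trans (Equiv.swap (τ b) 1), ?_, ?_⟩
    · simp [τ, Equiv.swap_apply_of_ne_of_ne (Ne.symm hb)]
    · simp

section Relabel

variable {α β : Type} [DecidableEq α] [DecidableEq β]

theorem interlaced_map_iff {f : α → β} (hf : Function.Injective f) (W : List α) (a b : α) :
    Interlaced (W.map f) (f a) (f b) ↔ Interlaced W a b := by
  have hfilter : (W.map f).filter (fun x => x == f a || x == f b) =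
      (W.filter fun x => x == a || x == b).map f := by
    rw [List.filter_map]
    congr 2
    funext x
    simp [hf.beq_eq]
  have hinj := List.map_injective_iff.mpr hf
  simp only [Interlaced, hfilter]
  rw [show [f a, f b, f a, f b] = [a, b, a, b].map f from rfl,
    show [f b, f a, f b, f a] = [b, a, b, a].map f from rfl, hinj.eq_iff, hinj.eq_iff]

def interlacementGraphMapIso (e : α ≃ β) (W : List α) :
    interlacementGraph W ≃g interlacementGraph (W.map e) where
  toEquiv := e
  map_rel_iff' {a b} := by
    show (e a ≠ e b ∧ _) ↔ (a ≠ b ∧ _)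
    rw [e.injective.ne_iff, interlaced_map_iff e.injective, interlaced_map_iff e.injective]

theorem IsDOW.map {W : List α} (e : α ≃ β) (hW : IsDOW W) : IsDOW (W.map e) := fun x => by
  rw [← e.apply_symm_apply x, List.count_map_of_injective _ _ e.injective, hW]

theorem IsDOW.length_eq [Fintype α] {W : List α} (hW : IsDOW W) :
    W.length = 2 * Fintype.card α :=
  calc W.length = ∑ a, W.count a := by
        simpa using (Multiset.sum_count_eq_card (m := (W : Multiset α))
          fun a _ => Finset.mem_univ a).symm
    _ = ∑ _a : α, 2 := Finset.sum_congr rfl fun a _ => hW a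
    _ = 2 * Fintype.card α := by simp [mul_comm]

end Relabel

def c4Word {α : Type} (v : Fin 4 → α) : List α := [v 0, v 3, v 1, v 0, v 2, v 1, v 3, v 2]

def IsC4Labeling {α : Type} [DecidableEq α] (W : List α) (v : Fin 4 ≃ α) : Prop :=
  (∀ i, (interlacementGraph W).Adj (v i) (v (i + 1))) ∧
    (W ~r c4Word v ∨ W.reverse ~r c4Word v)

instance {α : Type} [DecidableEq α] (W : List α) (v : Fin 4 ≃ α) :
    Decidable (IsC4Labeling W v) :=
  inferInstanceAs (Decidable (_ ∧ _))

namespace IsC4Labeling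

variable {α β : Type} [DecidableEq α] [DecidableEq β] {W : List α} {v : Fin 4 ≃ α}

theorem map (e : α ≃ β) (h : IsC4Labeling W v) : IsC4Labeling (W.map e) (v.trans e) := by
  refine ⟨fun i => (interlacementGraphMapIso e W).map_adj_iff.mpr (h.1 i), ?_⟩
  rw [← List.map_reverse]
  exact h.2.imp (·.map e) (·.map e)

theorem cyclicEquiv (h : IsC4Labeling W v) : CyclicEquiv W (c4Word v) := by
  rcases h.2 with h | h
  · exact .of_isRotated h
  · exact (CyclicEquiv.rev W).trans (.of_isRotated h)

end IsC4Labeling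

set_option synthInstance.maxSize 2000 in
theorem exists_isC4Labeling_zero_cons : ∀ b c d e f g h : Fin 4, b ≤ 1 →
    IsDOW [0, b, c, d, e, f, g, h] →
    (interlacementGraph [0, b, c, d, e, f, g, h]).IsRegularOfDegree 2 →
    ∃ v : Fin 4 ≃ Fin 4, IsC4Labeling [0, b, c, d, e, f, g, h] v := by
  decide

theorem exists_isC4Labeling_of_isRegularOfDegree {W : List (Fin 4)} (hW : IsDOW W)
    (hreg : (interlacementGraph W).IsRegularOfDegree 2) : ∃ v, IsC4Labeling W v := by
  obtain ⟨a, b, c, d, e, f, g, h, rfl⟩ :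
      ∃ a b c d e f g h : Fin 4, W = [a, b, c, d, e, f, g, h] := by
    match W, (by simpa using hW.length_eq : W.length = 8) with
    | [a, b, c, d, e, f, g, h], _ => exact ⟨a, b, c, d, e, f, g, h, rfl⟩
  obtain ⟨σ, ha, hb⟩ := exists_perm_apply_eq_zero_and_le_one a b
  have hσW : [a, b, c, d, e, f, g, h].map σ = [0, σ b, σ c, σ d, σ e, σ f, σ g, σ h] := by
    simp [ha]
  have hW' := hW.map σ
  have hreg' := hreg.of_iso (interlacementGraphMapIso σ _).symm
  rw [hσW] at hW' hreg'
  obtain ⟨v, hv⟩ := exists_isC4Labeling_zero_cons _ _ _ _ _ _ _ hb hW' hreg'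
  have := hv.map σ.symm
  rw [← hσW, List.map_map, Equiv.symm_comp_self, List.map_id] at this
  exact ⟨_, this⟩

/-- A double occurrence word whose interlacement graph is a 4-cycle is
cyclically equivalent to `v₁ v₄ v₂ v₁ v₃ v₂ v₄ v₃` for vertices labeled in
cyclic order. -/
theorem stmt14 (W : List (Fin 4)) (hW : IsDOW W)
    (hI : Nonempty (interlacementGraph W ≃g cycle4)) :
    ∃ v : Fin 4 ≃ Fin 4,
      (∀ i : Fin 4, (interlacementGraph W).Adj (v i) (v (i + 1))) ∧
      CyclicEquiv W [v 0, v 3, v 1, v 0, v 2, v 1, v 3, v 2] := by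
  obtain ⟨e⟩ := hI
  obtain ⟨v, hv⟩ :=
    exists_isC4Labeling_of_isRegularOfDegree hW (cycle4_isRegularOfDegree_two.of_iso e)
  exact ⟨v, hv.1, hv.cyclicEquiv⟩
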